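/- arXiv:1812.07545 — 5 statements merged into one kernel-verified Lean document; each statement's English description precedes it below -/
import Mathlib

section
/- Let α, β, p, q, k > 0 with kp < 1 and kq > 1. Every function x : ℝ → ℝ which satisfies x'(t) = -(α|x(t)|^p + β|x(t)|^q)^k · sign(x(t)) for all t ≥ 0 (with sign(0) = 0) satisfies x(t) = 0 for all t ≥ γ(α,β,p,q,k), regardless of the initial condition x(0). -/
/-!
While a solution `x` stays positive, `t + G (x t)` is constant, where `φ s = (α s^p + β s^q)^k`
and `G w = ∫₀ʷ φ⁻¹`. As `x²` is nonincreasing, a solution that is positive at time `T` is positive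
on `[0, T]`, hence `T = G (x 0) - G (x T) < ∫₀^∞ φ⁻¹`; negative solutions follow from the symmetry
`x ↦ -x`. Because `kp < 1 < kq`, `φ⁻¹` is integrable at both ends, and factoring out `α s^p` and
substituting `u = (β/α) s^(q-p)` turns `∫₀^∞ φ⁻¹` into a Beta integral of the second kind, which
gives `γ(α,β,p,q,k)`.
-/

open MeasureTheory Set

theorem integral_rpow_mul_one_sub_rpow {a b : ℝ} (ha : 0 < a) (hb : 0 < b) :
    ∫ t in (0 : ℝ)..1, t ^ (a - 1) * (1 - t) ^ (b - 1) =
      Real.Gamma a * Real.Gamma b / Real.Gamma (a + b) := by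
  have h := Complex.betaIntegral_eq_Gamma_mul_div a b (by simpa) (by simpa)
  rw [← Complex.ofReal_add, Complex.Gamma_ofReal, Complex.Gamma_ofReal, Complex.Gamma_ofReal,
    Complex.betaIntegral] at h
  apply Complex.ofReal_injective
  push_cast
  rw [← h, ← intervalIntegral.integral_ofReal]
  refine intervalIntegral.integral_congr fun t ht => ?_
  rw [uIcc_of_le zero_le_one] at ht
  simp only [Complex.ofReal_mul, Complex.ofReal_cpow ht.1,
    Complex.ofReal_cpow (sub_nonneg.2 ht.2)]
  push_cast
  ring

theorem integral_rpow_mul_one_add_rpow_Ioi {a b : ℝ} (ha : 0 < a) (hb : 0 < b) :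
    ∫ u in Ioi 0, u ^ (a - 1) * (1 + u) ^ (-(a + b)) =
      Real.Gamma a * Real.Gamma b / Real.Gamma (a + b) := by
  have himage : (fun t : ℝ => t / (1 - t)) '' Ioo 0 1 = Ioi 0 := by
    refine Subset.antisymm ?_ fun u (hu : 0 < u) => ⟨u / (1 + u), ?_, ?_⟩
    · rintro _ ⟨t, ht, rfl⟩
      exact div_pos ht.1 (sub_pos.2 ht.2)
    · exact ⟨by positivity, (div_lt_one (by positivity)).2 (by linarith)⟩
    · field_simp
      ring
  have hderiv : ∀ t ∈ Ioo (0 : ℝ) 1,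
      HasDerivWithinAt (fun t => t / (1 - t)) ((1 - t) ^ 2)⁻¹ (Ioo 0 1) t := fun t ht => by
    have h1t : 1 - t ≠ 0 := (sub_pos.2 ht.2).ne'
    refine (((hasDerivAt_id t).div ((hasDerivAt_id t).const_sub 1) h1t).congr_deriv
      ?_).hasDerivWithinAt
    simp only [id]
    field_simp
    ring
  have hinj : InjOn (fun t : ℝ => t / (1 - t)) (Ioo 0 1) := fun s hs t ht hst => by
    have hs1 := (sub_pos.2 hs.2).ne'
    have ht1 := (sub_pos.2 ht.2).ne'
    field_simp at hst
    linarith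
  rw [← himage, integral_image_eq_integral_abs_deriv_smul measurableSet_Ioo hderiv hinj,
    ← integral_rpow_mul_one_sub_rpow ha hb, intervalIntegral.integral_of_le zero_le_one,
    integral_Ioc_eq_integral_Ioo]
  refine setIntegral_congr_fun measurableSet_Ioo fun t ht => ?_
  have ht0 := ht.1
  have ht1 : 0 < 1 - t := sub_pos.2 ht.2
  have hsum : 1 + t / (1 - t) = (1 - t)⁻¹ := by field_simp; ring
  rw [smul_eq_mul, hsum, abs_of_pos (by positivity), Real.div_rpow ht0.le ht1.le,
    Real.inv_rpow ht1.le, ← Real.rpow_neg ht1.le, neg_neg, ← Real.rpow_natCast,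
    ← Real.rpow_neg ht1.le]
  have hexp : (1 - t) ^ (b - 1) =
      (1 - t) ^ (-((2 : ℕ) : ℝ)) * ((1 - t) ^ (-(a - 1)) * (1 - t) ^ (a + b)) := by
    rw [← Real.rpow_add ht1, ← Real.rpow_add ht1]
    congr 1
    push_cast
    ring
  rw [div_eq_mul_inv, ← Real.rpow_neg ht1.le, hexp]
  ring

theorem integral_rpow_mul_one_add_mul_rpow_Ioi {a b c r : ℝ} (ha : 0 < a) (hb : 0 < b)
    (hc : 0 < c) (hr : 0 < r) :
    ∫ s in Ioi 0, s ^ (r * a - 1) * (1 + c * s ^ r) ^ (-(a + b)) =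
      c ^ (-a) * (Real.Gamma a * Real.Gamma b / Real.Gamma (a + b)) / r := by
  have hpow : ∫ s in Ioi 0, s ^ (r * a - 1) * (1 + c * s ^ r) ^ (-(a + b)) =
      r⁻¹ * ∫ u in Ioi 0, u ^ (a - 1) * (1 + c * u) ^ (-(a + b)) := by
    rw [← integral_comp_rpow_Ioi_of_pos (inv_pos.2 hr), ← integral_const_mul]
    refine setIntegral_congr_fun measurableSet_Ioi fun u (hu : 0 < u) => ?_
    rw [smul_eq_mul, ← Real.rpow_mul hu.le, ← Real.rpow_mul hu.le, inv_mul_cancel₀ hr.ne',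
      Real.rpow_one, mul_assoc, ← mul_assoc (u ^ _), ← Real.rpow_add hu]
    congr 3
    field_simp
    ring
  have hscale : ∫ u in Ioi 0, u ^ (a - 1) * (1 + c * u) ^ (-(a + b)) =
      c ^ (-a) * ∫ u in Ioi 0, u ^ (a - 1) * (1 + u) ^ (-(a + b)) := by
    have h := integral_comp_mul_left_Ioi (fun u => u ^ (a - 1) * (1 + u) ^ (-(a + b))) 0 hc
    simp only [mul_zero, smul_eq_mul] at h
    rw [setIntegral_congr_fun measurableSet_Ioi fun u (hu : 0 < u) => by
      rw [Real.mul_rpow hc.le hu.le, mul_assoc], integral_const_mul] at h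
    have hca : c ^ (-a) = (c ^ (a - 1))⁻¹ * c⁻¹ := by
      rw [Real.rpow_neg hc.le, Real.rpow_sub_one hc.ne']
      field_simp
    rw [hca, mul_assoc, ← h, inv_mul_cancel_left₀ (Real.rpow_pos_of_pos hc _).ne']
  rw [hpow, hscale, integral_rpow_mul_one_add_rpow_Ioi ha hb]
  field_simp

theorem inv_mul_rpow_rpow {c s : ℝ} (hc : 0 ≤ c) (hs : 0 ≤ s) (p k : ℝ) :
    ((c * s ^ p) ^ k)⁻¹ = c ^ (-k) * s ^ (-(k * p)) := by
  rw [Real.mul_rpow hc (Real.rpow_nonneg hs p), ← Real.rpow_mul hs, mul_inv, Real.rpow_neg hc,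
    Real.rpow_neg hs, mul_comm p]

section SettlingIntegral

variable {α β p q k : ℝ}

theorem integrableOn_inv_rpow_add_rpow_Ioi (hα : 0 < α) (hβ : 0 < β) (hk : 0 < k)
    (hkp : k * p < 1) (hkq : 1 < k * q) :
    IntegrableOn (fun s => ((α * s ^ p + β * s ^ q) ^ k)⁻¹) (Ioi 0) := by
  have hmeas : Measurable (fun s : ℝ => ((α * s ^ p + β * s ^ q) ^ k)⁻¹) := by fun_prop
  rw [← Ioc_union_Ioi_eq_Ioi zero_le_one]
  refine IntegrableOn.union ?_ ?_
  · have hdom : IntegrableOn (fun s : ℝ => α ^ (-k) * s ^ (-(k * p))) (Ioc 0 1) :=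
      (intervalIntegral.intervalIntegrable_rpow' (by linarith)).1.const_mul _
    refine hdom.mono' hmeas.aestronglyMeasurable
      ((ae_restrict_iff' measurableSet_Ioc).2 (ae_of_all _ fun s hs => ?_))
    have hs0 : 0 < s := hs.1
    rw [Real.norm_of_nonneg (by positivity), ← inv_mul_rpow_rpow hα.le hs0.le]
    exact inv_anti₀ (by positivity)
      (Real.rpow_le_rpow (by positivity) (le_add_of_nonneg_right (by positivity)) hk.le)
  · have hdom : IntegrableOn (fun s : ℝ => β ^ (-k) * s ^ (-(k * q))) (Ioi 1) :=
      (integrableOn_Ioi_rpow_of_lt (by linarith) zero_lt_one).const_mul _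
    refine hdom.mono' hmeas.aestronglyMeasurable
      ((ae_restrict_iff' measurableSet_Ioi).2 (ae_of_all _ fun s (hs : 1 < s) => ?_))
    have hs0 : 0 < s := zero_lt_one.trans hs
    rw [Real.norm_of_nonneg (by positivity), ← inv_mul_rpow_rpow hβ.le hs0.le]
    exact inv_anti₀ (by positivity)
      (Real.rpow_le_rpow (by positivity) (le_add_of_nonneg_left (by positivity)) hk.le)

theorem integral_inv_rpow_add_rpow_Ioi (hα : 0 < α) (hβ : 0 < β) (hk : 0 < k)
    (hkp : k * p < 1) (hkq : 1 < k * q) :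
    ∫ s in Ioi 0, ((α * s ^ p + β * s ^ q) ^ k)⁻¹ =
      Real.Gamma ((1 - k * p) / (q - p)) * Real.Gamma ((k * q - 1) / (q - p)) /
        (α ^ k * Real.Gamma k * (q - p)) * (α / β) ^ ((1 - k * p) / (q - p)) := by
  have hqp : 0 < q - p := sub_pos.2 (lt_of_mul_lt_mul_left (hkp.trans hkq) hk.le)
  set a := (1 - k * p) / (q - p)
  set b := (k * q - 1) / (q - p)
  have ha : 0 < a := div_pos (by linarith) hqp
  have hb : 0 < b := div_pos (by linarith) hqp
  have hab : a + b = k := by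
    simp only [a, b]
    field_simp
    ring
  have hra : (q - p) * a - 1 = -(k * p) := by
    simp only [a]
    field_simp
    ring
  have hfactor : ∀ s ∈ Ioi (0 : ℝ), ((α * s ^ p + β * s ^ q) ^ k)⁻¹ =
      α ^ (-k) * (s ^ ((q - p) * a - 1) * (1 + β / α * s ^ (q - p)) ^ (-(a + b))) := by
    intro s (hs : 0 < s)
    have hsum : α * s ^ p + β * s ^ q = α * s ^ p * (1 + β / α * s ^ (q - p)) := by
      rw [show q = p + (q - p) by ring, Real.rpow_add hs, add_sub_cancel_left]
      field_simp
    rw [hsum, Real.mul_rpow (by positivity) (by positivity), mul_inv,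
      inv_mul_rpow_rpow hα.le hs.le, hra, hab,
      Real.rpow_neg (by positivity : (0 : ℝ) ≤ 1 + β / α * s ^ (q - p)) k, mul_assoc]
  rw [setIntegral_congr_fun measurableSet_Ioi hfactor, integral_const_mul,
    integral_rpow_mul_one_add_mul_rpow_Ioi ha hb (div_pos hβ hα) hqp, hab,
    Real.rpow_neg hα.le, Real.rpow_neg (div_pos hβ hα).le, ← Real.inv_rpow (div_pos hβ hα).le,
    inv_div]
  field_simp

end SettlingIntegral

section SettlingTime

variable {φ x : ℝ → ℝ}

theorem hasDerivAt_integral_inv (hφ : ContinuousOn φ (Ioi 0)) (hpos : ∀ s, 0 < s → 0 < φ s)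
    (hint : IntegrableOn (fun s => (φ s)⁻¹) (Ioi 0)) {v : ℝ} (hv : 0 < v) :
    HasDerivAt (fun w => ∫ s in (0 : ℝ)..w, (φ s)⁻¹) (φ v)⁻¹ v := by
  have hφinv : ContinuousOn (fun s => (φ s)⁻¹) (Ioi 0) :=
    hφ.inv₀ fun s hs => (hpos s hs).ne'
  refine intervalIntegral.integral_hasDerivAt_right ?_
    (hφinv.stronglyMeasurableAtFilter isOpen_Ioi v hv) (hφinv.continuousAt (Ioi_mem_nhds hv))
  exact (intervalIntegrable_iff_integrableOn_Ioc_of_le hv.le).2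
    (hint.mono_set Ioc_subset_Ioi_self)

theorem integral_inv_pos (hpos : ∀ s, 0 < s → 0 < φ s)
    (hint : IntegrableOn (fun s => (φ s)⁻¹) (Ioi 0)) {v : ℝ} (hv : 0 < v) :
    0 < ∫ s in (0 : ℝ)..v, (φ s)⁻¹ := by
  refine intervalIntegral.intervalIntegral_pos_of_pos_on ?_
    (fun s hs => inv_pos.2 (hpos s hs.1)) hv
  exact (intervalIntegrable_iff_integrableOn_Ioc_of_le hv.le).2
    (hint.mono_set Ioc_subset_Ioi_self)

theorem integral_inv_le_integral_Ioi (hpos : ∀ s, 0 < s → 0 < φ s)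
    (hint : IntegrableOn (fun s => (φ s)⁻¹) (Ioi 0)) {v : ℝ} (hv : 0 ≤ v) :
    ∫ s in (0 : ℝ)..v, (φ s)⁻¹ ≤ ∫ s in Ioi 0, (φ s)⁻¹ := by
  rw [intervalIntegral.integral_of_le hv]
  refine setIntegral_mono_set hint ?_ Ioc_subset_Ioi_self.eventuallyLE
  filter_upwards [self_mem_ae_restrict measurableSet_Ioi] with s hs
  exact (inv_pos.2 (hpos s hs)).le

theorem sq_antitoneOn_of_hasDerivAt (hφ : ∀ s, 0 < s → 0 ≤ φ s)
    (hx : ∀ t, 0 ≤ t → HasDerivAt x (-φ |x t| * Real.sign (x t)) t) :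
    AntitoneOn (fun t => x t ^ 2) (Ici 0) := by
  have hx' : ∀ t, 0 ≤ t → HasDerivAt (fun t => x t ^ 2)
      (-(2 * φ |x t| * (Real.sign (x t) * x t))) t := fun t ht =>
    ((hx t ht).fun_pow 2).congr_deriv (by push_cast; ring)
  refine antitoneOn_of_hasDerivWithinAt_nonpos (convex_Ici 0)
    (fun t ht => (hx' t ht).continuousAt.continuousWithinAt)
    (fun t ht => (hx' t (interior_subset ht)).hasDerivWithinAt) fun t ht => ?_
  rcases eq_or_ne (x t) 0 with h | h
  · simp [h]
  · nlinarith [hφ _ (abs_pos.2 h), Real.sign_mul_nonneg (x t)]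

theorem pos_of_pos_of_le (hφ : ∀ s, 0 < s → 0 ≤ φ s)
    (hx : ∀ t, 0 ≤ t → HasDerivAt x (-φ |x t| * Real.sign (x t)) t)
    {s T : ℝ} (hs : 0 ≤ s) (hsT : s ≤ T) (hT : 0 < x T) : 0 < x s := by
  by_contra! hxs
  have hcont : ContinuousOn x (Icc s T) := fun t ht =>
    (hx t (hs.trans ht.1)).continuousAt.continuousWithinAt
  obtain ⟨c, hc, hxc⟩ := intermediate_value_Icc hsT hcont ⟨hxs, hT.le⟩
  have := sq_antitoneOn_of_hasDerivAt hφ hx (mem_Ici.2 (hs.trans hc.1))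
    (mem_Ici.2 (hs.trans hsT)) hc.2
  simp only [hxc] at this
  nlinarith

theorem lt_integral_inv_of_pos (hφ : ContinuousOn φ (Ioi 0)) (hpos : ∀ s, 0 < s → 0 < φ s)
    (hint : IntegrableOn (fun s => (φ s)⁻¹) (Ioi 0))
    (hx : ∀ t, 0 ≤ t → HasDerivAt x (-φ |x t| * Real.sign (x t)) t)
    {T : ℝ} (hT : 0 ≤ T) (hxT : 0 < x T) : T < ∫ s in Ioi 0, (φ s)⁻¹ := by
  set G := fun w => ∫ s in (0 : ℝ)..w, (φ s)⁻¹
  have hxpos : ∀ t ∈ Icc 0 T, 0 < x t := fun t ht =>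
    pos_of_pos_of_le (fun s hs => (hpos s hs).le) hx ht.1 ht.2 hxT
  have hH : ∀ t ∈ Icc 0 T, HasDerivAt (fun t => G (x t) + t) 0 t := by
    intro t ht
    have hxt := hxpos t ht
    have hd := hx t ht.1
    rw [abs_of_pos hxt, Real.sign_of_pos hxt, mul_one] at hd
    refine (((hasDerivAt_integral_inv hφ hpos hint hxt).comp t hd).add
      (hasDerivAt_id t)).congr_deriv ?_
    simp [(hpos _ hxt).ne']
  have hconst := constant_of_has_deriv_right_zero
    (fun t ht => (hH t ht).continuousAt.continuousWithinAt)
    (fun t ht => (hH t (Ico_subset_Icc_self ht)).hasDerivWithinAt) T ⟨hT, le_rfl⟩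
  have hGT : 0 < G (x T) := integral_inv_pos hpos hint hxT
  have hG0 : G (x 0) ≤ ∫ s in Ioi 0, (φ s)⁻¹ :=
    integral_inv_le_integral_Ioi hpos hint (hxpos 0 ⟨le_rfl, hT⟩).le
  simp only [add_zero] at hconst
  linarith

theorem eq_zero_of_integral_inv_le (hφ : ContinuousOn φ (Ioi 0)) (hpos : ∀ s, 0 < s → 0 < φ s)
    (hint : IntegrableOn (fun s => (φ s)⁻¹) (Ioi 0))
    (hx : ∀ t, 0 ≤ t → HasDerivAt x (-φ |x t| * Real.sign (x t)) t)
    {t : ℝ} (ht : ∫ s in Ioi 0, (φ s)⁻¹ ≤ t) : x t = 0 := by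
  have ht0 : 0 ≤ t :=
    (setIntegral_nonneg measurableSet_Ioi fun s hs => (inv_pos.2 (hpos s hs)).le).trans ht
  have hnx : ∀ t, 0 ≤ t → HasDerivAt (-x) (-φ |(-x) t| * Real.sign ((-x) t)) t := fun t ht =>
    (hx t ht).neg.congr_deriv (by simp [abs_neg, Real.sign_neg])
  rcases lt_trichotomy (x t) 0 with hneg | hzero | hpos'
  · exact absurd ht (lt_integral_inv_of_pos hφ hpos hint hnx ht0 (neg_pos.2 hneg)).not_ge
  · exact hzero
  · exact absurd ht (lt_integral_inv_of_pos hφ hpos hint hx ht0 hpos').not_ge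

end SettlingTime

theorem predefined_time_scalar_convergence_general
    (α β p q k : ℝ) (hα : 0 < α) (hβ : 0 < β) (hk : 0 < k)
    (hkp : k * p < 1) (hkq : 1 < k * q)
    (x : ℝ → ℝ)
    (hx : ∀ t, 0 ≤ t →
      HasDerivAt x (-((α * |x t| ^ p + β * |x t| ^ q) ^ k) * Real.sign (x t)) t) :
    ∀ t, Real.Gamma ((1 - k * p) / (q - p)) * Real.Gamma ((k * q - 1) / (q - p)) /
        (α ^ k * Real.Gamma k * (q - p)) * (α / β) ^ ((1 - k * p) / (q - p)) ≤ t →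
      x t = 0 := by
  intro t ht
  have hpos : ∀ s : ℝ, 0 < s → 0 < (α * s ^ p + β * s ^ q) ^ k := fun s hs => by positivity
  have hcont : ContinuousOn (fun s : ℝ => (α * s ^ p + β * s ^ q) ^ k) (Ioi 0) := by
    have hid : ∀ r : ℝ, ContinuousOn (fun s : ℝ => s ^ r) (Ioi 0) := fun r =>
      continuousOn_id.rpow_const fun s hs => Or.inl (ne_of_gt hs)
    exact ((continuousOn_const.mul (hid p)).add (continuousOn_const.mul (hid q))).rpow_const
      fun _ _ => Or.inr hk.le
  refine eq_zero_of_integral_inv_le hcont hpos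
    (integrableOn_inv_rpow_add_rpow_Ioi hα hβ hk hkp hkq) hx ?_
  rwa [integral_inv_rpow_add_rpow_Ioi hα hβ hk hkp hkq]

/-- Any solution of `x' = -(α|x|^p + β|x|^q)^k sign(x)` (for `t ≥ 0`)
reaches the origin no later than time `γ(α,β,p,q,k)`, regardless of `x 0`. -/
theorem predefined_time_scalar_convergence
    (α β p q k : ℝ) (hα : 0 < α) (hβ : 0 < β) (hp : 0 < p) (hq : 0 < q) (hk : 0 < k)
    (hkp : k * p < 1) (hkq : 1 < k * q)
    (x : ℝ → ℝ)
    (hx : ∀ t, 0 ≤ t →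
      HasDerivAt x (-((α * |x t| ^ p + β * |x t| ^ q) ^ k) * Real.sign (x t)) t) :
    ∀ t, Real.Gamma ((1 - k * p) / (q - p)) * Real.Gamma ((k * q - 1) / (q - p)) /
        (α ^ k * Real.Gamma k * (q - p)) * (α / β) ^ ((1 - k * p) / (q - p)) ≤ t →
      x t = 0 :=
  predefined_time_scalar_convergence_general α β p q k hα hβ hk hkp hkq x hx
end

section
/- Let α, β, p, q, k > 0 with kp < 1 and kq > 1, and define T(x0) = ∫₀^{|x0|} (α z^p + β z^q)^{-k} dz for x0 ∈ ℝ. Then sup_{x0 ∈ ℝ} T(x0) = γ(α,β,p,q,k); in particular γ(α,β,p,q,k) is the least upper bound of the settling-time function of the system x' = -(α|x|^p + β|x|^q)^k sign(x). -/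
/-!
Substituting `u = z ^ (q - p)` turns `∫₀^∞ (α z^p + β z^q)^(-k) dz` into
`(q - p)⁻¹ ∫₀^∞ u^(a-1) (α + β u)^(-k) du` with `a = (1 - k p)/(q - p)`, and the scaling
`u = (α/β) x` reduces this to `∫₀^∞ x^(a-1) (1 + x)^(-(a+b)) dx = B(a, b)` with `b = k - a`, the
beta integral in the variable `x = t/(1 - t)`. The conditions `k p < 1 < k q` make the integrand
integrable at `0` and at `∞`, and as it is positive, `T(x0)` increases to the full integral as
`|x0| → ∞`.
-/

open MeasureTheory Set Real

lemma integral_Ioo_rpow_mul_one_sub_rpow {a b : ℝ} (ha : 0 < a) (hb : 0 < b) :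
    ∫ x in Ioo (0:ℝ) 1, x ^ (a - 1) * (1 - x) ^ (b - 1) = ProbabilityTheory.beta a b := by
  have hcast : ∫ x in Ioc (0:ℝ) 1, (x : ℂ) ^ ((a : ℂ) - 1) * (1 - (x : ℂ)) ^ ((b : ℂ) - 1) =
      ((∫ x in Ioc (0:ℝ) 1, x ^ (a - 1) * (1 - x) ^ (b - 1) : ℝ) : ℂ) := by
    rw [← integral_complex_ofReal]
    refine setIntegral_congr_fun measurableSet_Ioc fun x ⟨hx0, hx1⟩ ↦ ?_
    push_cast
    rw [Complex.ofReal_cpow hx0.le, Complex.ofReal_cpow (by linarith)]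
    push_cast
    rfl
  rw [ProbabilityTheory.beta_eq_betaIntegralReal a b ha hb, Complex.betaIntegral,
    intervalIntegral.integral_of_le zero_le_one, hcast, Complex.ofReal_re,
    integral_Ioc_eq_integral_Ioo]

lemma integral_Ioi_rpow_mul_one_add_rpow_neg {a b : ℝ} (ha : 0 < a) (hb : 0 < b) :
    ∫ x in Ioi (0:ℝ), x ^ (a - 1) * (1 + x) ^ (-(a + b)) = ProbabilityTheory.beta a b := by
  set φ : ℝ → ℝ := fun x ↦ x / (1 - x)
  have hφ_image : φ '' Ioo 0 1 = Ioi 0 := by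
    ext y
    refine ⟨?_, fun (hy : 0 < y) ↦ ⟨y / (1 + y), ⟨by positivity, ?_⟩, ?_⟩⟩
    · rintro ⟨x, ⟨hx0, hx1⟩, rfl⟩
      exact div_pos hx0 (by linarith)
    · rw [div_lt_one (by positivity)]; linarith
    · have : (1:ℝ) + y ≠ 0 := by positivity
      simp only [φ]; field_simp; ring
  have hφ_deriv : ∀ x ∈ Ioo (0:ℝ) 1, HasDerivWithinAt φ (((1 - x) ^ 2)⁻¹) (Ioo 0 1) x := by
    intro x ⟨_, hx1⟩
    have h1x : (1:ℝ) - x ≠ 0 := by linarith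
    refine ((hasDerivAt_id x).div ((hasDerivAt_id x).const_sub 1) h1x).hasDerivWithinAt
      |>.congr_deriv ?_
    simp only [id]; field_simp; ring
  have hφ_inj : InjOn φ (Ioo 0 1) := by
    intro x ⟨_, hx1⟩ y ⟨_, hy1⟩ h
    have : (1:ℝ) - x ≠ 0 := by linarith
    have : (1:ℝ) - y ≠ 0 := by linarith
    simp only [φ] at h; field_simp at h; linarith
  rw [← hφ_image, integral_image_eq_integral_abs_deriv_smul measurableSet_Ioo hφ_deriv hφ_inj,
    ← integral_Ioo_rpow_mul_one_sub_rpow ha hb]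
  refine setIntegral_congr_fun measurableSet_Ioo fun x ⟨hx0, hx1⟩ ↦ ?_
  have h1x : 0 < 1 - x := by linarith
  have hφx : 1 + φ x = (1 - x)⁻¹ := by simp only [φ]; field_simp; ring
  rw [smul_eq_mul, hφx, abs_of_pos (by positivity), div_rpow hx0.le h1x.le, inv_rpow h1x.le,
    ← rpow_neg h1x.le, ← rpow_natCast, ← rpow_neg h1x.le, neg_neg, div_eq_mul_inv,
    ← rpow_neg h1x.le, mul_left_comm, mul_assoc, ← rpow_add h1x, ← rpow_add h1x]
  ring_nf

lemma integral_Ioi_rpow_mul_add_mul_rpow_neg {α β a b : ℝ} (hα : 0 < α) (hβ : 0 < β)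
    (ha : 0 < a) (hb : 0 < b) :
    ∫ u in Ioi (0:ℝ), u ^ (a - 1) * (α + β * u) ^ (-(a + b)) =
      ProbabilityTheory.beta a b * (α / β) ^ a / α ^ (a + b) := by
  set c := α / β
  have hc : 0 < c := div_pos hα hβ
  have h := integral_comp_mul_left_Ioi' (fun u ↦ u ^ (a - 1) * (α + β * u) ^ (-(a + b))) 0 hc
  rw [mul_zero] at h
  rw [← h, ← integral_Ioi_rpow_mul_one_add_rpow_neg ha hb, smul_eq_mul, ← integral_const_mul,
    ← integral_mul_const, ← integral_div]
  refine setIntegral_congr_fun measurableSet_Ioi fun x (hx : 0 < x) ↦ ?_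
  have hαx : α + β * (c * x) = α * (1 + x) := by simp only [c]; field_simp
  rw [hαx, mul_rpow hc.le hx.le, mul_rpow hα.le (by positivity), rpow_neg hα.le,
    rpow_sub_one hc.ne']
  field_simp

lemma integral_Ioi_mul_rpow_add_mul_rpow_neg {α β p r k : ℝ} (hα : 0 ≤ α) (hβ : 0 ≤ β)
    (hr : 0 < r) :
    ∫ z in Ioi (0:ℝ), (α * z ^ p + β * z ^ (p + r)) ^ (-k) =
      r⁻¹ * ∫ u in Ioi (0:ℝ), u ^ ((1 - k * p) / r - 1) * (α + β * u) ^ (-k) := by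
  rw [← integral_comp_rpow_Ioi_of_pos hr
    (g := fun u ↦ u ^ ((1 - k * p) / r - 1) * (α + β * u) ^ (-k)), ← integral_const_mul]
  refine setIntegral_congr_fun measurableSet_Ioi fun x (hx : 0 < x) ↦ ?_
  have hsplit : α * x ^ p + β * x ^ (p + r) = x ^ p * (α + β * x ^ r) := by
    rw [rpow_add hx]; ring
  have hexp : x ^ (r - 1) * (x ^ r) ^ ((1 - k * p) / r - 1) = (x ^ p) ^ (-k) := by
    rw [← rpow_mul hx.le, ← rpow_mul hx.le, ← rpow_add hx]
    congr 1
    field_simp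
    ring
  rw [hsplit, mul_rpow (by positivity) (by positivity), smul_eq_mul, ← hexp]
  field_simp

lemma integrableOn_rpow_neg_of_mul_rpow_le {f : ℝ → ℝ} {s : Set ℝ} {c e k : ℝ}
    (hs : MeasurableSet s) (hs_pos : s ⊆ Ioi 0) (hf : ContinuousOn f s)
    (hint : IntegrableOn (fun z ↦ z ^ (e * -k)) s) (hc : 0 < c) (hk : 0 ≤ k)
    (hle : ∀ z ∈ s, c * z ^ e ≤ f z) :
    IntegrableOn (fun z ↦ f z ^ (-k)) s := by
  have hcz : ∀ z ∈ s, 0 < c * z ^ e := fun z hz ↦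
    mul_pos hc (rpow_pos_of_pos (hs_pos hz) e)
  refine (hint.const_mul (c ^ (-k))).mono'
    ((hf.rpow_const fun z hz ↦ Or.inl ((hcz z hz).trans_le (hle z hz)).ne')
    |>.aestronglyMeasurable hs) (ae_restrict_of_forall_mem hs fun z hz ↦ ?_)
  rw [norm_of_nonneg (rpow_nonneg ((hcz z hz).le.trans (hle z hz)) _), rpow_mul (hs_pos hz).le,
    ← mul_rpow hc.le (rpow_nonneg (hs_pos hz).le e)]
  exact rpow_le_rpow_of_nonpos (hcz z hz) (hle z hz) (by linarith)

lemma integrableOn_Ioi_mul_rpow_add_mul_rpow_neg {α β p q k : ℝ} (hα : 0 < α) (hβ : 0 < β)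
    (hk : 0 ≤ k) (hkp : k * p < 1) (hkq : 1 < k * q) :
    IntegrableOn (fun z ↦ (α * z ^ p + β * z ^ q) ^ (-k)) (Ioi 0) := by
  have hcont : ContinuousOn (fun z ↦ α * z ^ p + β * z ^ q) (Ioi 0) := by
    intro z (hz : 0 < z)
    exact ContinuousAt.continuousWithinAt (by fun_prop (disch := exact Or.inl hz.ne'))
  rw [← Ioc_union_Ioi_eq_Ioi zero_le_one]
  refine IntegrableOn.union
    (integrableOn_rpow_neg_of_mul_rpow_le (e := p) measurableSet_Ioc Ioc_subset_Ioi_self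
      (hcont.mono Ioc_subset_Ioi_self) ?_ hα hk fun z ⟨hz, _⟩ ↦ ?_)
    (integrableOn_rpow_neg_of_mul_rpow_le (e := q) measurableSet_Ioi (Ioi_subset_Ioi zero_le_one)
      (hcont.mono (Ioi_subset_Ioi zero_le_one)) ?_ hβ hk fun z (hz : 1 < z) ↦ ?_)
  · exact (intervalIntegrable_iff_integrableOn_Ioc_of_le zero_le_one).1
      (intervalIntegral.intervalIntegrable_rpow' (by linarith))
  · have : 0 ≤ β * z ^ q := by positivity
    linarith
  · exact integrableOn_Ioi_rpow_of_lt (by linarith) zero_lt_one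
  · have : 0 ≤ α * z ^ p := mul_nonneg hα.le (rpow_nonneg (by linarith) p)
    linarith

lemma isLUB_range_intervalIntegral_abs {f : ℝ → ℝ} (hf : IntegrableOn f (Ioi 0))
    (hf_nonneg : ∀ x ∈ Ioi (0:ℝ), 0 ≤ f x) :
    IsLUB (range fun x ↦ ∫ z in (0:ℝ)..|x|, f z) (∫ z in Ioi 0, f z) := by
  refine ⟨?_, fun b hb ↦ ?_⟩
  · rintro _ ⟨x, rfl⟩
    beta_reduce
    rw [intervalIntegral.integral_of_le (abs_nonneg x)]
    exact setIntegral_mono_set hf (ae_restrict_of_forall_mem measurableSet_Ioi hf_nonneg)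
      Ioc_subset_Ioi_self.eventuallyLE
  · refine le_of_tendsto (intervalIntegral_tendsto_integral_Ioi 0 hf Filter.tendsto_id) ?_
    filter_upwards [Filter.eventually_ge_atTop 0] with x hx
    simpa [abs_of_nonneg hx] using hb ⟨x, rfl⟩

theorem settling_time_least_upper_bound_general
    (α β p q k : ℝ) (hα : 0 < α) (hβ : 0 < β) (hk : 0 < k)
    (hkp : k * p < 1) (hkq : 1 < k * q) :
    IsLUB (Set.range fun x0 : ℝ => ∫ z in (0:ℝ)..|x0|, (α * z ^ p + β * z ^ q) ^ (-k))
      (Real.Gamma ((1 - k * p) / (q - p)) * Real.Gamma ((k * q - 1) / (q - p)) /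
        (α ^ k * Real.Gamma k * (q - p)) * (α / β) ^ ((1 - k * p) / (q - p))) := by
  have hr : 0 < q - p := by nlinarith
  have ha : 0 < (1 - k * p) / (q - p) := div_pos (by linarith) hr
  have hb : 0 < (k * q - 1) / (q - p) := div_pos (by linarith) hr
  have hab : (1 - k * p) / (q - p) + (k * q - 1) / (q - p) = k := by field_simp; ring
  have hscale := integral_Ioi_rpow_mul_add_mul_rpow_neg hα hβ ha hb
  rw [hab] at hscale
  have hvalue :=
    integral_Ioi_mul_rpow_add_mul_rpow_neg (α := α) (β := β) (p := p) (k := k) hα.le hβ.le hr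
  rw [add_sub_cancel, hscale, ProbabilityTheory.beta, hab] at hvalue
  convert isLUB_range_intervalIntegral_abs
    (integrableOn_Ioi_mul_rpow_add_mul_rpow_neg hα hβ hk.le hkp hkq)
    fun z (hz : 0 < z) ↦ rpow_nonneg (by positivity) _ using 1
  rw [hvalue, div_eq_mul_inv _ (α ^ k * _ * _), mul_inv, mul_inv]
  ring

/-- With `T(x0) = ∫₀^{|x0|} (α z^p + β z^q)^{-k} dz`, the value
`γ(α,β,p,q,k)` is the least upper bound (supremum) of `T` over all `x0 ∈ ℝ`. -/
theorem settling_time_least_upper_bound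
    (α β p q k : ℝ) (hα : 0 < α) (hβ : 0 < β) (hp : 0 < p) (hq : 0 < q) (hk : 0 < k)
    (hkp : k * p < 1) (hkq : 1 < k * q) :
    IsLUB (Set.range fun x0 : ℝ => ∫ z in (0:ℝ)..|x0|, (α * z ^ p + β * z ^ q) ^ (-k))
      (Real.Gamma ((1 - k * p) / (q - p)) * Real.Gamma ((k * q - 1) / (q - p)) /
        (α ^ k * Real.Gamma k * (q - p)) * (α / β) ^ ((1 - k * p) / (q - p))) :=
  settling_time_least_upper_bound_general α β p q k hα hβ hk hkp hkq
end

section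
/- Let Q be an n×n real matrix, let κ₁,…,κₙ > 0, ζ ≥ 0, and let α, β, p, q, k > 0 with kp < 1 and kq > 1. Define F : ℝⁿ → ℝⁿ by F(x)ᵢ = κᵢ·[(α|(Qx)ᵢ|^p + β|(Qx)ᵢ|^q)^k + ζ]·sign((Qx)ᵢ), and F_∞ : ℝⁿ → ℝⁿ by F_∞(x)ᵢ = κᵢ·β^k·|(Qx)ᵢ|^{qk}·sign((Qx)ᵢ). Then for every x ∈ ℝⁿ, λ^{-qk}·F(λx) → F_∞(x) as λ → ∞, and F_∞(λx) = λ^{qk} F_∞(x) for all λ > 0; i.e., F is homogeneous in the +∞-limit with degree d_∞ = qk − 1 > 0 with respect to the standard dilation, with ∞-limit F_∞. -/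
open Filter Real

private lemma sign_mul_pos' {l z : ℝ} (hl : 0 < l) : Real.sign (l * z) = Real.sign z := by
  rcases lt_trichotomy z 0 with h | h | h
  · rw [Real.sign_of_neg h, Real.sign_of_neg (mul_neg_of_pos_of_neg hl h)]
  · simp [h]
  · rw [Real.sign_of_pos h, Real.sign_of_pos (mul_pos hl h)]

/-- The protocol vector field
`F(x)ᵢ = κᵢ[(α|(Qx)ᵢ|^p + β|(Qx)ᵢ|^q)^k + ζ]·sign((Qx)ᵢ)` is homogeneous in the
`+∞`-limit with degree `d_∞ = qk - 1 > 0` w.r.t. the standard dilation: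
`λ^{-(d_∞+1)} F(λx) = λ^{-qk} F(λx) → F_∞(x)` as `λ → ∞`, where
`F_∞(x)ᵢ = κᵢ β^k |(Qx)ᵢ|^{qk} sign((Qx)ᵢ)`, and `F_∞(λx) = λ^{qk} F_∞(x)` for
`λ > 0`. -/
theorem protocol_homogeneous_infinity_limit
    (n : ℕ) (Q : Matrix (Fin n) (Fin n) ℝ)
    (κ : Fin n → ℝ) (hκ : ∀ i, 0 < κ i) (ζ : ℝ) (hζ : 0 ≤ ζ)
    (α β p q k : ℝ) (hα : 0 < α) (hβ : 0 < β) (hp : 0 < p) (hq : 0 < q) (hk : 0 < k)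
    (hkp : k * p < 1) (hkq : 1 < k * q)
    (F Finf : (Fin n → ℝ) → (Fin n → ℝ))
    (hF : ∀ y i, F y i =
      κ i * ((α * |Q.mulVec y i| ^ p + β * |Q.mulVec y i| ^ q) ^ k + ζ) *
        Real.sign (Q.mulVec y i))
    (hFinf : ∀ y i, Finf y i =
      κ i * β ^ k * |Q.mulVec y i| ^ (q * k) * Real.sign (Q.mulVec y i)) :
    0 < q * k - 1 ∧
    ∀ x : Fin n → ℝ,
      Filter.Tendsto (fun l : ℝ => (l ^ (-(q * k))) • F (l • x)) Filter.atTop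
        (nhds (Finf x)) ∧
      ∀ l : ℝ, 0 < l → Finf (l • x) = (l ^ (q * k)) • Finf x := by
  have hpq : p < q := by nlinarith
  refine ⟨by nlinarith, fun x => ⟨?_, ?_⟩⟩
  · rw [tendsto_pi_nhds]
    intro i
    simp only [Pi.smul_apply, smul_eq_mul]
    have hmul : ∀ l : ℝ, Q.mulVec (l • x) i = l * Q.mulVec x i := by
      intro l
      rw [Matrix.mulVec_smul]
      rfl
    set z := Q.mulVec x i with hz
    rcases eq_or_ne z 0 with h0 | h0
    · have hFi : ∀ l : ℝ, F (l • x) i = 0 := by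
        intro l; rw [hF, hmul, h0]; simp
      have hv : Finf x i = 0 := by rw [hFinf, ← hz, h0]; simp
      simp only [hFi, mul_zero, hv]
      exact tendsto_const_nhds
    · have hzpos : 0 < |z| := abs_pos.mpr h0
      -- eventual equality
      have key : (fun l : ℝ => l ^ (-(q * k)) * F (l • x) i) =ᶠ[atTop]
          (fun l => κ i * ((α * l ^ (p - q) * |z| ^ p + β * |z| ^ q) ^ k + ζ * l ^ (-(q * k))) *
            Real.sign z) := by
        filter_upwards [eventually_gt_atTop 0] with l hl
        have hl0 : (0:ℝ) ≤ l := hl.le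
        have habs : |l * z| = l * |z| := by
          rw [abs_mul, abs_of_pos hl]
        have hA : (0:ℝ) ≤ α * l ^ (p - q) * |z| ^ p + β * |z| ^ q := by
          positivity
        have hlpq : l ^ (p - q) * l ^ q = l ^ p := by
          rw [← Real.rpow_add hl, sub_add_cancel]
        have hfact : α * |l * z| ^ p + β * |l * z| ^ q =
            l ^ q * (α * l ^ (p - q) * |z| ^ p + β * |z| ^ q) := by
          rw [habs, Real.mul_rpow hl0 (abs_nonneg z), Real.mul_rpow hl0 (abs_nonneg z)]
          linear_combination (-(α * |z| ^ p)) * hlpq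
        have hcancel : l ^ (-(q * k)) * l ^ (q * k) = 1 := by
          rw [← Real.rpow_add hl, neg_add_cancel, Real.rpow_zero]
        rw [hF, hmul, sign_mul_pos' hl, hfact,
          Real.mul_rpow (Real.rpow_nonneg hl0 q) hA, ← Real.rpow_mul hl0]
        linear_combination κ i * Real.sign z *
          (α * l ^ (p - q) * |z| ^ p + β * |z| ^ q) ^ k * hcancel
      have h1 : Tendsto (fun l : ℝ => l ^ (p - q)) atTop (nhds 0) := by
        have := tendsto_rpow_neg_atTop (by linarith : (0:ℝ) < q - p)
        simpa [neg_sub] using this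
      have h2 : Tendsto (fun l : ℝ => l ^ (-(q * k))) atTop (nhds 0) :=
        tendsto_rpow_neg_atTop (by positivity)
      have h3 : Tendsto (fun l : ℝ => α * l ^ (p - q) * |z| ^ p + β * |z| ^ q)
          atTop (nhds (β * |z| ^ q)) := by
        have := ((h1.const_mul α).mul_const (|z| ^ p)).add_const (β * |z| ^ q)
        simpa using this
      have hβz : (0:ℝ) < β * |z| ^ q := by positivity
      have h4 : Tendsto (fun l : ℝ => (α * l ^ (p - q) * |z| ^ p + β * |z| ^ q) ^ k)
          atTop (nhds ((β * |z| ^ q) ^ k)) :=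
        ((Real.continuousAt_rpow_const _ _ (Or.inl hβz.ne')).tendsto).comp h3
      have h5 : Tendsto (fun l : ℝ =>
          κ i * ((α * l ^ (p - q) * |z| ^ p + β * |z| ^ q) ^ k + ζ * l ^ (-(q * k))) *
            Real.sign z) atTop
          (nhds (κ i * ((β * |z| ^ q) ^ k + ζ * 0) * Real.sign z)) :=
        ((h4.add (h2.const_mul ζ)).const_mul (κ i)).mul_const _
      have hval : Finf x i = κ i * ((β * |z| ^ q) ^ k + ζ * 0) * Real.sign z := by
        rw [hFinf, ← hz, Real.mul_rpow hβ.le (Real.rpow_nonneg (abs_nonneg z) q),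
          ← Real.rpow_mul (abs_nonneg z)]
        ring
      rw [hval]
      exact h5.congr' key.symm
  · intro l hl
    funext i
    have hmul : Q.mulVec (l • x) i = l * Q.mulVec x i := by
      rw [Matrix.mulVec_smul]; rfl
    rw [Pi.smul_apply, smul_eq_mul, hFinf, hFinf, hmul, sign_mul_pos' hl, abs_mul,
      abs_of_pos hl, Real.mul_rpow hl.le (abs_nonneg _)]
    ring
end

section
/- Let α, β, p, q, k > 0 with kp < 1 and kq > 1. Then the function f(x) = x·(α x^p + β x^q)^k is convex on (0, ∞). -/
/-- The function `f(x) = x (α x^p + β x^q)^k` is convex on `(0, ∞)`. -/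
theorem poly_func_convexOn
    (α β p q k : ℝ) (hα : 0 < α) (hβ : 0 < β) (hp : 0 < p) (hq : 0 < q) (hk : 0 < k)
    (hkp : k * p < 1) (hkq : 1 < k * q) :
    ConvexOn ℝ (Set.Ioi 0) (fun x : ℝ => x * (α * x ^ p + β * x ^ q) ^ k) := by
  set g : ℝ → ℝ := fun x => α * x ^ p + β * x ^ q with hg_def
  set dg : ℝ → ℝ := fun x => α * (p * x ^ (p - 1)) + β * (q * x ^ (q - 1)) with hdg_def
  set ddg : ℝ → ℝ := fun x =>
    α * (p * ((p - 1) * x ^ (p - 1 - 1))) + β * (q * ((q - 1) * x ^ (q - 1 - 1))) with hddg_def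
  have hgpos : ∀ x : ℝ, 0 < x → 0 < g x := fun x hx => by
    have := Real.rpow_pos_of_pos hx p
    have := Real.rpow_pos_of_pos hx q
    positivity
  have hgd : ∀ x : ℝ, 0 < x → HasDerivAt g (dg x) x := by
    intro x hx
    exact ((Real.hasDerivAt_rpow_const (p := p) (Or.inl hx.ne')).const_mul α).add
      ((Real.hasDerivAt_rpow_const (p := q) (Or.inl hx.ne')).const_mul β)
  have hdgd : ∀ x : ℝ, 0 < x → HasDerivAt dg (ddg x) x := by
    intro x hx
    exact (((Real.hasDerivAt_rpow_const (p := p - 1) (Or.inl hx.ne')).const_mul p).const_mul α).add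
      (((Real.hasDerivAt_rpow_const (p := q - 1) (Or.inl hx.ne')).const_mul q).const_mul β)
  set f1 : ℝ → ℝ := fun x => 1 * g x ^ k + x * (dg x * k * g x ^ (k - 1)) with hf1_def
  set f2 : ℝ → ℝ := fun x =>
    1 * (dg x * k * g x ^ (k - 1)) +
      (1 * (dg x * k * g x ^ (k - 1)) +
        x * (ddg x * k * g x ^ (k - 1) +
          dg x * k * (dg x * (k - 1) * g x ^ (k - 1 - 1)))) with hf2_def
  have key1 : ∀ x ∈ interior (Set.Ioi (0:ℝ)), HasDerivWithinAt
      (fun x : ℝ => x * (α * x ^ p + β * x ^ q) ^ k) (f1 x) (interior (Set.Ioi 0)) x := by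
    intro x hx
    rw [interior_Ioi] at hx
    have hgk : HasDerivAt (fun y => g y ^ k) (dg x * k * g x ^ (k - 1)) x :=
      (hgd x hx).rpow_const (Or.inl (hgpos x hx).ne')
    exact ((hasDerivAt_id x).mul hgk).hasDerivWithinAt
  have key2 : ∀ x ∈ interior (Set.Ioi (0:ℝ)), HasDerivWithinAt f1 (f2 x)
      (interior (Set.Ioi 0)) x := by
    intro x hx
    rw [interior_Ioi] at hx
    have hgk : HasDerivAt (fun y => g y ^ k) (dg x * k * g x ^ (k - 1)) x :=
      (hgd x hx).rpow_const (Or.inl (hgpos x hx).ne')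
    have hgk1 : HasDerivAt (fun y => g y ^ (k - 1)) (dg x * (k - 1) * g x ^ (k - 1 - 1)) x :=
      (hgd x hx).rpow_const (Or.inl (hgpos x hx).ne')
    have hh : HasDerivAt (fun y => dg y * k * g y ^ (k - 1))
        (ddg x * k * g x ^ (k - 1) + dg x * k * (dg x * (k - 1) * g x ^ (k - 1 - 1))) x :=
      ((hdgd x hx).mul_const k).mul hgk1
    exact ((hgk.const_mul 1).add ((hasDerivAt_id x).mul hh)).hasDerivWithinAt
  have key3 : ∀ x ∈ interior (Set.Ioi (0:ℝ)), 0 ≤ f2 x := by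
    intro x hx
    rw [interior_Ioi] at hx
    have hs : 0 < x ^ (p - 1 - 1) := Real.rpow_pos_of_pos hx _
    have ht : 0 < x ^ (q - 1 - 1) := Real.rpow_pos_of_pos hx _
    have hG : 0 < g x := hgpos x hx
    have hW : 0 < g x ^ (k - 1 - 1) := Real.rpow_pos_of_pos hG _
    have e1 : x ^ (p - 1) = x ^ (p - 1 - 1) * x := by
      rw [← Real.rpow_add_one hx.ne' (p - 1 - 1)]; ring_nf
    have e2 : x ^ p = x ^ (p - 1 - 1) * x * x := by
      rw [← Real.rpow_add_one hx.ne' (p - 1 - 1), ← Real.rpow_add_one hx.ne']; ring_nf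
    have e3 : x ^ (q - 1) = x ^ (q - 1 - 1) * x := by
      rw [← Real.rpow_add_one hx.ne' (q - 1 - 1)]; ring_nf
    have e4 : x ^ q = x ^ (q - 1 - 1) * x * x := by
      rw [← Real.rpow_add_one hx.ne' (q - 1 - 1), ← Real.rpow_add_one hx.ne']; ring_nf
    have e5 : g x ^ (k - 1) = g x ^ (k - 1 - 1) * g x := by
      rw [← Real.rpow_add_one hG.ne' (k - 1 - 1)]; ring_nf
    set s := x ^ (p - 1 - 1)
    set t := x ^ (q - 1 - 1)
    set W := g x ^ (k - 1 - 1)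
    have hgx : g x = α * (s * x * x) + β * (t * x * x) := by rw [hg_def]; dsimp only; rw [e2, e4]
    have expand : f2 x = k * W * (x * x * x) *
        (α * s * (α * s) * (p * (1 + k * p)) +
          α * s * (β * t) * ((p - q) ^ 2 + p + q + 2 * (k * p) * q) +
          β * t * (β * t) * (q * (1 + k * q))) := by
      rw [hf2_def]
      dsimp only
      rw [e5, hdg_def, hddg_def]
      dsimp only
      rw [show x ^ (p - 1 - 1) = s from rfl, show x ^ (q - 1 - 1) = t from rfl,
        show g x ^ (k - 1 - 1) = W from rfl, e1, e3, hgx]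
      ring
    rw [expand]
    have h1 : (0:ℝ) < 1 + k * p := by nlinarith
    have h2 : (0:ℝ) < (p - q) ^ 2 + p + q + 2 * (k * p) * q := by
      nlinarith [sq_nonneg (p - q), mul_pos (mul_pos hk hp) hq]
    have h3 : (0:ℝ) < 1 + k * q := by nlinarith
    have hE : (0:ℝ) < α * s * (α * s) * (p * (1 + k * p)) +
        α * s * (β * t) * ((p - q) ^ 2 + p + q + 2 * (k * p) * q) +
        β * t * (β * t) * (q * (1 + k * q)) := by
      have t1 := mul_pos (mul_pos (mul_pos hα hs) (mul_pos hα hs)) (mul_pos hp h1)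
      have t2 := mul_pos (mul_pos (mul_pos hα hs) (mul_pos hβ ht)) h2
      have t3 := mul_pos (mul_pos (mul_pos hβ ht) (mul_pos hβ ht)) (mul_pos hq h3)
      linarith
    have := mul_pos (mul_pos (mul_pos hk hW) (mul_pos (mul_pos hx hx) hx)) hE
    linarith
  have hcont : ContinuousOn (fun x : ℝ => x * (α * x ^ p + β * x ^ q) ^ k) (Set.Ioi 0) := by
    apply ContinuousOn.mul continuousOn_id
    apply ContinuousOn.rpow_const
    · exact (continuousOn_const.mul (continuousOn_id.rpow_const fun x hx => Or.inl (ne_of_gt hx))).add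
        (continuousOn_const.mul (continuousOn_id.rpow_const fun x hx => Or.inl (ne_of_gt hx)))
    · intro x hx; exact Or.inr hk.le
  exact convexOn_of_hasDerivWithinAt2_nonneg (convex_Ioi 0) hcont key1 key2 key3
end

section
/- Let n ∈ ℕ, n ≥ 1, let a₁,…,aₙ be positive real numbers, and let α, β, p, q, k > 0 with kp < 1 and kq > 1. Then (1/n)·Σᵢ aᵢ·(α aᵢ^p + β aᵢ^q)^k ≥ ā·(α ā^p + β ā^q)^k, where ā = (1/n)·Σᵢ aᵢ is the arithmetic mean. -/
/-!
For `x > 0`, `x (α x ^ p + β x ^ q) ^ k = (α x ^ r + β x ^ s) ^ k` with `r = p + 1/k` and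
`s = q + 1/k`, so `k r ≥ 1` and `k s ≥ 1`. A `k`-th power `g ^ k` of a positive function is convex
where `(k - 1) g' ^ 2 + g g'' ≥ 0`; for `g = A + B` with `A = α x ^ r`, `B = β x ^ s` this quantity
is, up to the factor `x⁻²`, the quadratic form
`r (k r - 1) A ² + s (k s - 1) B ² + (r (k s - 1) + s (k r - 1) + (r - s) ²) A B`
with nonnegative coefficients. Jensen's inequality with equal weights concludes.
-/

open Finset Set

theorem convexOn_rpow_comp_of_hasDerivAt {D : Set ℝ} (hD : Convex ℝ D) (hDo : IsOpen D)
    {g g' g'' : ℝ → ℝ} {k : ℝ} (hk : 0 < k) (hg : ∀ x ∈ D, 0 < g x)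
    (hg' : ∀ x ∈ D, HasDerivAt g (g' x) x) (hg'' : ∀ x ∈ D, HasDerivAt g' (g'' x) x)
    (h : ∀ x ∈ D, 0 ≤ (k - 1) * g' x ^ 2 + g x * g'' x) :
    ConvexOn ℝ D (fun x => g x ^ k) := by
  have hf' (x : ℝ) (hx : x ∈ D) :
      HasDerivAt (fun y => g y ^ k) (g' x * k * g x ^ (k - 1)) x :=
    (hg' x hx).rpow_const (Or.inl (hg x hx).ne')
  have hf'' (x : ℝ) (hx : x ∈ D) :
      HasDerivAt (fun y => g' y * k * g y ^ (k - 1))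
        (g'' x * k * g x ^ (k - 1) + g' x * k * (g' x * (k - 1) * g x ^ (k - 1 - 1))) x :=
    ((hg'' x hx).mul_const k).mul ((hg' x hx).rpow_const (Or.inl (hg x hx).ne'))
  refine convexOn_of_hasDerivWithinAt2_nonneg hD (f' := fun x => g' x * k * g x ^ (k - 1))
    (f'' := fun x => g'' x * k * g x ^ (k - 1) + g' x * k * (g' x * (k - 1) * g x ^ (k - 1 - 1)))
    (fun x hx => (hf' x hx).continuousAt.continuousWithinAt) ?_ ?_ ?_ <;>
    rw [hDo.interior_eq] <;> intro x hx
  · exact (hf' x hx).hasDerivWithinAt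
  · exact (hf'' x hx).hasDerivWithinAt
  have hgx := hg x hx
  have := h x hx
  have : 0 < g x ^ k := Real.rpow_pos_of_pos hgx k
  simp only [Real.rpow_sub_one hgx.ne']
  -- `(g ^ k)'' = k g ^ (k - 2) ((k - 1) g' ^ 2 + g g'')`
  calc (0 : ℝ) ≤ k * (g x ^ k / g x / g x) * ((k - 1) * g' x ^ 2 + g x * g'' x) := by positivity
    _ = _ := by field_simp; ring

theorem sub_one_mul_sq_add_mul_nonneg {k r s A B : ℝ} (hk : 0 < k) (hr : 1 ≤ k * r)
    (hs : 1 ≤ k * s) (hA : 0 ≤ A) (hB : 0 ≤ B) :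
    0 ≤ (k - 1) * (r * A + s * B) ^ 2 + (A + B) * (r * (r - 1) * A + s * (s - 1) * B) := by
  have hr0 : 0 < r := pos_of_mul_pos_right (one_pos.trans_le hr) hk.le
  have hs0 : 0 < s := pos_of_mul_pos_right (one_pos.trans_le hs) hk.le
  have key : (k - 1) * (r * A + s * B) ^ 2 + (A + B) * (r * (r - 1) * A + s * (s - 1) * B) =
      r * (k * r - 1) * A ^ 2 + s * (k * s - 1) * B ^ 2
        + (r * (k * s - 1) + s * (k * r - 1) + (r - s) ^ 2) * (A * B) := by ring
  have hkr : 0 ≤ k * r - 1 := sub_nonneg.2 hr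
  have hks : 0 ≤ k * s - 1 := sub_nonneg.2 hs
  rw [key]
  positivity

theorem convexOn_rpow_add_rpow_rpow {α β r s k : ℝ} (hα : 0 < α) (hβ : 0 < β) (hk : 0 < k)
    (hr : 1 ≤ k * r) (hs : 1 ≤ k * s) :
    ConvexOn ℝ (Ioi 0) (fun x : ℝ => (α * x ^ r + β * x ^ s) ^ k) := by
  have hmon' (t x : ℝ) (hx : 0 < x) : HasDerivAt (fun y : ℝ => y ^ t) (t * x ^ (t - 1)) x :=
    Real.hasDerivAt_rpow_const (Or.inl hx.ne')
  have hmon'' (t x : ℝ) (hx : 0 < x) :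
      HasDerivAt (fun y : ℝ => t * y ^ (t - 1)) (t * ((t - 1) * x ^ (t - 1 - 1))) x :=
    (hmon' (t - 1) x hx).const_mul t
  refine convexOn_rpow_comp_of_hasDerivAt (convex_Ioi 0) isOpen_Ioi hk
    (fun x hx => by have := mem_Ioi.1 hx; positivity)
    (fun x hx => ((hmon' r x hx).const_mul α).add ((hmon' s x hx).const_mul β))
    (fun x hx => ((hmon'' r x hx).const_mul α).add ((hmon'' s x hx).const_mul β))
    fun x hx => ?_
  have hx : 0 < x := hx
  have hA : 0 ≤ α * x ^ r := by positivity
  have hB : 0 ≤ β * x ^ s := by positivity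
  have := sub_one_mul_sq_add_mul_nonneg hk hr hs hA hB
  simp only [Real.rpow_sub_one hx.ne']
  calc (0 : ℝ) ≤ ((k - 1) * (r * (α * x ^ r) + s * (β * x ^ s)) ^ 2 + (α * x ^ r + β * x ^ s) *
        (r * (r - 1) * (α * x ^ r) + s * (s - 1) * (β * x ^ s))) / x ^ 2 := by positivity
    _ = _ := by field_simp

theorem mul_rpow_add_rpow_rpow_eq {α β p q k x : ℝ} (hα : 0 ≤ α) (hβ : 0 ≤ β) (hk : k ≠ 0)
    (hx : 0 < x) :
    x * (α * x ^ p + β * x ^ q) ^ k = (α * x ^ (p + k⁻¹) + β * x ^ (q + k⁻¹)) ^ k := by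
  nth_rw 1 [← Real.rpow_inv_rpow hx.le hk]
  rw [← Real.mul_rpow (by positivity) (by positivity), mul_add, Real.rpow_add hx,
    Real.rpow_add hx]
  ring_nf

theorem convexOn_mul_rpow_add_rpow_rpow {α β p q k : ℝ} (hα : 0 < α) (hβ : 0 < β) (hp : 0 ≤ p)
    (hq : 0 ≤ q) (hk : 0 < k) :
    ConvexOn ℝ (Ioi 0) (fun x : ℝ => x * (α * x ^ p + β * x ^ q) ^ k) := by
  have hkr (t : ℝ) (ht : 0 ≤ t) : 1 ≤ k * (t + k⁻¹) := by
    rw [mul_add, mul_inv_cancel₀ hk.ne']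
    nlinarith
  exact (convexOn_rpow_add_rpow_rpow hα hβ hk (hkr p hp) (hkr q hq)).congr fun x hx =>
    (mul_rpow_add_rpow_rpow_eq hα.le hβ.le hk.ne' hx).symm

theorem mean_inequality_poly_func_general
    (n : ℕ) (hn : 1 ≤ n) (a : Fin n → ℝ) (ha : ∀ i, 0 < a i)
    (α β p q k : ℝ) (hα : 0 < α) (hβ : 0 < β) (hp : 0 < p) (hq : 0 < q) (hk : 0 < k) :
    ((1 / (n : ℝ)) * ∑ i, a i) *
      (α * ((1 / (n : ℝ)) * ∑ i, a i) ^ p + β * ((1 / (n : ℝ)) * ∑ i, a i) ^ q) ^ k ≤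
    (1 / (n : ℝ)) * ∑ i, a i * (α * a i ^ p + β * a i ^ q) ^ k := by
  have hweights : ∑ _i : Fin n, 1 / (n : ℝ) = 1 := by
    simp only [sum_const, card_univ, Fintype.card_fin, nsmul_eq_mul]
    field_simp [Nat.cast_ne_zero.2 (Nat.one_le_iff_ne_zero.1 hn)]
  have jensen := (convexOn_mul_rpow_add_rpow_rpow hα hβ hp.le hq.le hk).map_sum_le
    (fun _ _ => by positivity) hweights fun i _ => ha i
  simpa only [smul_eq_mul, ← mul_sum] using jensen

/-- Jensen-type inequality for `f(x) = x (α x^p + β x^q)^k`: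
`(1/n) Σᵢ aᵢ (α aᵢ^p + β aᵢ^q)^k ≥ ā (α ā^p + β ā^q)^k` where `ā` is the arithmetic
mean of the positive numbers `a₁, …, aₙ`. -/
theorem mean_inequality_poly_func
    (n : ℕ) (hn : 1 ≤ n) (a : Fin n → ℝ) (ha : ∀ i, 0 < a i)
    (α β p q k : ℝ) (hα : 0 < α) (hβ : 0 < β) (hp : 0 < p) (hq : 0 < q) (hk : 0 < k)
    (hkp : k * p < 1) (hkq : 1 < k * q) :
    ((1 / (n : ℝ)) * ∑ i, a i) *
      (α * ((1 / (n : ℝ)) * ∑ i, a i) ^ p + β * ((1 / (n : ℝ)) * ∑ i, a i) ^ q) ^ k ≤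
    (1 / (n : ℝ)) * ∑ i, a i * (α * a i ^ p + β * a i ^ q) ^ k :=
  mean_inequality_poly_func_general n hn a ha α β p q k hα hβ hp hq hk
end
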